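/- For the multiple knapsack problem with n knapsacks, the optimum total profit is at most the greedy-by-ratio total profit plus n times the maximum profit of a single unassigned item that fits in some knapsack; consequently max(greedy, best single item) ≥ OPT/(n+1). -/

import Mathlib

/-!
If greedy packs every item that fits into some knapsack, it dominates every feasible assignment.
Otherwise let `i` be the first such item it skips and `ρ = cᵢ / wᵢ`. Compared with the set `T` of
items greedy packed before `i`, a feasible assignment `A` can only add items of ratio at most `ρ`
and drop items of ratio at least `ρ`, so `c(A) ≤ c(T) + ρ (w(A) - w(T))`. When `i` was skipped,
every residual capacity was below `wᵢ`, i.e. `∑ W - w(T) < n wᵢ`, while `w(A) ≤ ∑ W`. Hence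
`c(A) ≤ c(T) + n cᵢ`, and `cᵢ` is at most the best single unassigned item.
-/

/-- Index (smallest, by convention) of a knapsack with maximal remaining
capacity among those in which an item of weight `w` fits, if any. -/
noncomputable def pick {n : ℕ} (r : Fin n → ℝ) (w : ℝ) : Option (Fin n) :=
  (List.finRange n).find? (fun j => decide (w ≤ r j ∧ ∀ j' : Fin n, w ≤ r j' → r j' ≤ r j))

/-- Total profit of the simple greedy algorithm: items are processed in order
(assumed sorted by nonincreasing ratio), each assigned to the knapsack of
largest remaining capacity in which it fits, if any. -/
noncomputable def greedyProfit {n : ℕ} : List (ℝ × ℝ) → (Fin n → ℝ) → ℝ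
  | [], _ => 0
  | (c, w) :: rest, r =>
    match pick r w with
    | none => greedyProfit rest r
    | some j => c + greedyProfit rest (Function.update r j (r j - w))

noncomputable def greedyAssign {n : ℕ} : List (ℝ × ℝ) → (Fin n → ℝ) → List (Option (Fin n))
  | [], _ => []
  | (_, w) :: rest, r =>
    match pick r w with
    | none => none :: greedyAssign rest r
    | some j => some j :: greedyAssign rest (Function.update r j (r j - w))

/-- Each item goes to at most one knapsack since the assignment is a function. -/
def FeasibleAssign {n : ℕ} (W : Fin n → ℝ) (items : List (ℝ × ℝ))
    (a : Fin items.length → Option (Fin n)) : Prop :=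
  ∀ j : Fin n, ∑ i ∈ Finset.univ.filter (fun i => a i = some j), (items.get i).2 ≤ W j

def assignProfit {n : ℕ} (items : List (ℝ × ℝ)) (a : Fin items.length → Option (Fin n)) : ℝ :=
  ∑ i ∈ Finset.univ.filter (fun i => a i ≠ none), (items.get i).1

def SortedByRatio (items : List (ℝ × ℝ)) : Prop :=
  items.Pairwise (fun p q => q.1 / q.2 ≤ p.1 / p.2)

open Finset

section Exchange

variable {ι R : Type*} [DecidableEq ι] [Ring R] [PartialOrder R] [IsOrderedAddMonoid R]

theorem sum_sub_sum_le_mul_sum_sub_sum (A T : Finset ι) (c w : ι → R) (ρ : R)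
    (hA : ∀ k ∈ A \ T, c k ≤ ρ * w k) (hT : ∀ k ∈ T \ A, ρ * w k ≤ c k) :
    ∑ k ∈ A, c k - ∑ k ∈ T, c k ≤ ρ * (∑ k ∈ A, w k - ∑ k ∈ T, w k) := by
  rw [← sum_sdiff_sub_sum_sdiff (s₁ := T), ← sum_sdiff_sub_sum_sdiff (s₁ := T), mul_sub,
    mul_sum, mul_sum]
  exact sub_le_sub (sum_le_sum hA) (sum_le_sum hT)

end Exchange

theorem lt_of_pick_eq_none {n : ℕ} {r : Fin n → ℝ} {w : ℝ} (h : pick r w = none) (j : Fin n) :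
    r j < w := by
  by_contra! hj
  obtain ⟨j₀, -, hmax⟩ := exists_max_image univ r ⟨j, mem_univ j⟩
  rw [pick, List.find?_eq_none] at h
  refine h j₀ (List.mem_finRange j₀) (decide_eq_true ⟨hj.trans (hmax j (mem_univ j)), ?_⟩)
  exact fun j' _ => hmax j' (mem_univ j')

noncomputable def greedyAssignment {n : ℕ} (items : List (ℝ × ℝ)) (r : Fin n → ℝ)
    (k : Fin items.length) : Option (Fin n) :=
  (greedyAssign items r).getD k none

section GreedyAssignment

variable {n : ℕ} (c w : ℝ) (rest : List (ℝ × ℝ)) (r : Fin n → ℝ)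

@[simp]
theorem greedyAssignment_cons_zero :
    greedyAssignment ((c, w) :: rest) r (0 : Fin (rest.length + 1)) = pick r w := by
  cases h : pick r w <;> simp [greedyAssignment, greedyAssign, h]

theorem greedyAssignment_cons_succ_of_pick_eq_none (h : pick r w = none) (k : Fin rest.length) :
    greedyAssignment ((c, w) :: rest) r k.succ = greedyAssignment rest r k := by
  simp [greedyAssignment, greedyAssign, h]

theorem greedyAssignment_cons_succ_of_pick_eq_some {j : Fin n} (h : pick r w = some j)
    (k : Fin rest.length) :
    greedyAssignment ((c, w) :: rest) r k.succ =
      greedyAssignment rest (Function.update r j (r j - w)) k := by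
  simp [greedyAssignment, greedyAssign, h]

end GreedyAssignment

theorem greedyProfit_eq_assignProfit {n : ℕ} (items : List (ℝ × ℝ)) (r : Fin n → ℝ) :
    greedyProfit items r = assignProfit items (greedyAssignment items r) := by
  induction items generalizing r with
  | nil => simp [greedyProfit, assignProfit]
  | cons p rest ih =>
    obtain ⟨c, w⟩ := p
    simp only [assignProfit, sum_filter, List.length_cons, Fin.sum_univ_succ] at ih ⊢
    cases hpk : pick r w with
    | none => simp [greedyProfit, greedyAssignment_cons_succ_of_pick_eq_none _ _ _ _ hpk, hpk, ih]
    | some j => simp [greedyProfit, greedyAssignment_cons_succ_of_pick_eq_some _ _ _ _ hpk, hpk, ih]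

/-- When greedy reaches an item it cannot place, every residual capacity is below the item's
weight, and the residual capacities add up to the initial ones minus what was packed so far. -/
theorem sum_lt_of_greedyAssignment_eq_none {n : ℕ} (hn : 0 < n) (items : List (ℝ × ℝ))
    (r : Fin n → ℝ) (i : Fin items.length) (hi : greedyAssignment items r i = none) :
    ∑ j, r j < n * (items.get i).2 +
      ∑ k ∈ univ.filter (fun k => k < i ∧ greedyAssignment items r k ≠ none), (items.get k).2 := by
  induction items generalizing r with
  | nil => exact i.elim0
  | cons p rest ih =>
    obtain ⟨c, w⟩ := p
    simp only [sum_filter] at ih ⊢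
    cases i using Fin.cases with
    | zero =>
      simp only [List.length_cons, Fin.sum_univ_succ]
      have hpk : pick r w = none := by simpa using hi
      have hlt : ∑ j, r j < ∑ _j : Fin n, w :=
        sum_lt_sum_of_nonempty (univ_nonempty_iff.2 ⟨⟨0, hn⟩⟩) fun j _ => lt_of_pick_eq_none hpk j
      simpa using hlt
    | succ i =>
      simp only [List.length_cons, Fin.sum_univ_succ]
      cases hpk : pick r w with
      | none =>
        simp only [greedyAssignment_cons_succ_of_pick_eq_none _ _ _ _ hpk] at hi ⊢
        simpa [hpk, Fin.succ_lt_succ_iff] using ih r i hi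
      | some j =>
        simp only [greedyAssignment_cons_succ_of_pick_eq_some _ _ _ _ hpk] at hi ⊢
        have hrest := ih _ i hi
        rw [sum_update_of_mem (mem_univ j)] at hrest
        have hsplit := sum_eq_add_sum_sdiff_singleton_of_mem (mem_univ j) r
        simp only [Fin.succ_lt_succ_iff, Fin.succ_pos, true_and, greedyAssignment_cons_zero, hpk,
          ne_eq, reduceCtorEq, not_false_eq_true, if_true, List.get_cons_succ', List.get_cons_zero]
          at hrest ⊢
        linarith

section Feasible

variable {n : ℕ} {W : Fin n → ℝ} {items : List (ℝ × ℝ)} {a : Fin items.length → Option (Fin n)}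

theorem FeasibleAssign.weight_le (ha : FeasibleAssign W items a) (hw : ∀ p ∈ items, 0 ≤ p.2)
    {k : Fin items.length} {j : Fin n} (hk : a k = some j) : (items.get k).2 ≤ W j :=
  (single_le_sum (fun i _ => hw _ (items.get_mem i)) (mem_filter.2 ⟨mem_univ k, hk⟩)).trans (ha j)

theorem FeasibleAssign.sum_weight_le (ha : FeasibleAssign W items a) :
    ∑ k ∈ univ.filter (fun k => a k ≠ none), (items.get k).2 ≤ ∑ j, W j :=
  calc ∑ k ∈ univ.filter (fun k => a k ≠ none), (items.get k).2
      = ∑ k, ∑ j, if a k = some j then (items.get k).2 else 0 := by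
        rw [sum_filter]
        refine sum_congr rfl fun k _ => ?_
        cases a k <;> simp
    _ = ∑ j, ∑ k ∈ univ.filter (fun k => a k = some j), (items.get k).2 := by
        rw [sum_comm]
        simp only [sum_filter]
    _ ≤ ∑ j, W j := sum_le_sum fun j _ => ha j

end Feasible

section Sorted

variable {items : List (ℝ × ℝ)} {i k : Fin items.length}

theorem SortedByRatio.ratio_mul_le_of_le (hs : SortedByRatio items) (hki : k ≤ i)
    (hw : 0 < (items.get k).2) :
    (items.get i).1 / (items.get i).2 * (items.get k).2 ≤ (items.get k).1 := by
  rcases hki.eq_or_lt with rfl | hlt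
  · rw [div_mul_cancel₀ _ hw.ne']
  · exact (le_div_iff₀ hw).1 (List.pairwise_iff_get.1 hs k i hlt)

theorem SortedByRatio.le_ratio_mul_of_le (hs : SortedByRatio items) (hik : i ≤ k)
    (hw : 0 < (items.get k).2) :
    (items.get k).1 ≤ (items.get i).1 / (items.get i).2 * (items.get k).2 := by
  rcases hik.eq_or_lt with rfl | hlt
  · rw [div_mul_cancel₀ _ hw.ne']
  · exact (div_le_iff₀ hw).1 (List.pairwise_iff_get.1 hs i k hlt)

end Sorted

section Bounds

variable {n : ℕ} {W : Fin n → ℝ} {items : List (ℝ × ℝ)} {a : Fin items.length → Option (Fin n)}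

theorem assignProfit_le_greedyProfit (hpos : ∀ p ∈ items, 0 < p.1 ∧ 0 < p.2)
    (ha : FeasibleAssign W items a)
    (hall : ∀ i, (∃ j, (items.get i).2 ≤ W j) → greedyAssignment items W i ≠ none) :
    assignProfit items a ≤ greedyProfit items W := by
  rw [greedyProfit_eq_assignProfit, assignProfit, assignProfit]
  refine sum_le_sum_of_subset_of_nonneg (fun k hk => ?_)
    fun k _ _ => (hpos _ (items.get_mem k)).1.le
  simp only [mem_filter, mem_univ, true_and] at hk ⊢
  obtain ⟨j, hj⟩ := Option.ne_none_iff_exists'.1 hk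
  exact hall k ⟨j, ha.weight_le (fun p hp => (hpos p hp).2.le) hj⟩

theorem assignProfit_le_greedyProfit_add_of_first_skipped
    (hpos : ∀ p ∈ items, 0 < p.1 ∧ 0 < p.2) (hsorted : SortedByRatio items)
    (ha : FeasibleAssign W items a) {i : Fin items.length}
    (hi : greedyAssignment items W i = none) (hfit : ∃ j, (items.get i).2 ≤ W j)
    (hfirst : ∀ k < i, (∃ j, (items.get k).2 ≤ W j) → greedyAssignment items W k ≠ none) :
    assignProfit items a ≤ greedyProfit items W + n * (items.get i).1 := by
  have hw k : 0 < (items.get k).2 := (hpos _ (items.get_mem k)).2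
  set ρ := (items.get i).1 / (items.get i).2
  set A := univ.filter (fun k => a k ≠ none)
  set T := univ.filter (fun k => k < i ∧ greedyAssignment items W k ≠ none)
  have hgain : ∀ k ∈ A \ T, (items.get k).1 ≤ ρ * (items.get k).2 := by
    intro k hk
    simp only [A, T, mem_sdiff, mem_filter, mem_univ, true_and, not_and] at hk
    refine hsorted.le_ratio_mul_of_le (not_lt.1 fun hki => hk.2 hki ?_) (hw k)
    obtain ⟨j, hj⟩ := Option.ne_none_iff_exists'.1 hk.1
    exact hfirst k hki ⟨j, ha.weight_le (fun p hp => (hpos p hp).2.le) hj⟩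
  have hloss : ∀ k ∈ T \ A, ρ * (items.get k).2 ≤ (items.get k).1 := by
    intro k hk
    simp only [T, mem_sdiff, mem_filter] at hk
    exact hsorted.ratio_mul_le_of_le hk.1.2.1.le (hw k)
  have hexchange := sum_sub_sum_le_mul_sum_sub_sum A T _ _ ρ hgain hloss
  obtain ⟨j₀, -⟩ := hfit
  have hcap := sum_lt_of_greedyAssignment_eq_none j₀.pos items W i hi
  have hT : ∑ k ∈ T, (items.get k).1 ≤ greedyProfit items W := by
    rw [greedyProfit_eq_assignProfit]
    refine sum_le_sum_of_subset_of_nonneg (fun k hk => ?_)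
      fun k _ _ => (hpos _ (items.get_mem k)).1.le
    simp only [T, mem_filter] at hk ⊢
    exact ⟨hk.1, hk.2.2⟩
  have hρ : 0 ≤ ρ := div_nonneg (hpos _ (items.get_mem i)).1.le (hw i).le
  have hρw : ρ * (n * (items.get i).2) = n * (items.get i).1 := by
    rw [mul_left_comm, div_mul_cancel₀ _ (hw i).ne']
  have hgap : ρ * (∑ k ∈ A, (items.get k).2 - ∑ k ∈ T, (items.get k).2)
      ≤ ρ * (n * (items.get i).2) :=
    mul_le_mul_of_nonneg_left (by linarith [ha.sum_weight_le]) hρ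
  rw [assignProfit]
  linarith

end Bounds

theorem stmt14_general (n : ℕ) (W : Fin n → ℝ)
    (items : List (ℝ × ℝ))
    (hpos : ∀ p ∈ items, 0 < p.1 ∧ 0 < p.2)
    (hsorted : SortedByRatio items)
    (opt : ℝ)
    (hopt : IsGreatest {v : ℝ | ∃ a : Fin items.length → Option (Fin n),
        FeasibleAssign W items a ∧ assignProfit items a = v} opt)
    (best : ℝ)
    (hbest : best = sSup {v : ℝ | ∃ i : Fin items.length,
        (greedyAssign items W).getD i.val none = none ∧
        (∃ j : Fin n, (items.get i).2 ≤ W j) ∧ (items.get i).1 = v}) :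
    opt ≤ greedyProfit items W + n * best ∧
    opt / (n + 1) ≤ max (greedyProfit items W) best := by
  have hbdd : BddAbove {v : ℝ | ∃ i : Fin items.length,
      (greedyAssign items W).getD i.val none = none ∧
      (∃ j : Fin n, (items.get i).2 ≤ W j) ∧ (items.get i).1 = v} :=
    ((Set.finite_range fun i => (items.get i).1).subset
      (by rintro _ ⟨i, -, -, rfl⟩; exact ⟨i, rfl⟩)).bddAbove
  obtain ⟨a, ha, rfl⟩ := hopt.1
  have hbound : assignProfit items a ≤ greedyProfit items W + n * best := by
    by_cases hskip : ∃ i, greedyAssignment items W i = none ∧ ∃ j, (items.get i).2 ≤ W j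
    · obtain ⟨i, ⟨hi, hfit⟩, hmin⟩ := wellFounded_lt.has_min _ hskip
      have hbest_i : (items.get i).1 ≤ best := hbest ▸ le_csSup hbdd ⟨i, hi, hfit, rfl⟩
      calc assignProfit items a ≤ greedyProfit items W + n * (items.get i).1 :=
            assignProfit_le_greedyProfit_add_of_first_skipped hpos hsorted ha hi hfit
              fun k hki hkfit hk => hmin k ⟨hk, hkfit⟩ hki
        _ ≤ greedyProfit items W + n * best := by gcongr
    · have hbest_nonneg : 0 ≤ best := hbest ▸ Real.sSup_nonneg
        (by rintro _ ⟨i, -, -, rfl⟩; exact (hpos _ (items.get_mem i)).1.le)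
      calc assignProfit items a ≤ greedyProfit items W :=
            assignProfit_le_greedyProfit hpos ha fun i hfit hi => hskip ⟨i, hi, hfit⟩
        _ ≤ greedyProfit items W + n * best := le_add_of_nonneg_right (by positivity)
  refine ⟨hbound, (div_le_iff₀ (by positivity)).2 ?_⟩
  have := mul_le_mul_of_nonneg_left (le_max_right (greedyProfit items W) best) n.cast_nonneg
  linarith [le_max_left (greedyProfit items W) best]

/-- Multiple knapsack with `n` knapsacks: the optimum total profit is at most
the greedy-by-ratio total profit plus `n` times the largest profit of a
single greedy-unassigned item fitting in some knapsack; consequently the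
better of the greedy profit and that single item achieves at least
`OPT / (n + 1)`. -/
theorem stmt14 (n : ℕ) (hn : 0 < n) (W : Fin n → ℝ) (hWpos : ∀ j, 0 ≤ W j)
    (items : List (ℝ × ℝ))
    (hpos : ∀ p ∈ items, 0 < p.1 ∧ 0 < p.2)
    (hsorted : SortedByRatio items)
    (opt : ℝ)
    (hopt : IsGreatest {v : ℝ | ∃ a : Fin items.length → Option (Fin n),
        FeasibleAssign W items a ∧ assignProfit items a = v} opt)
    (best : ℝ)
    (hbest : best = sSup {v : ℝ | ∃ i : Fin items.length,
        (greedyAssign items W).getD i.val none = none ∧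
        (∃ j : Fin n, (items.get i).2 ≤ W j) ∧ (items.get i).1 = v}) :
    opt ≤ greedyProfit items W + n * best ∧
    opt / (n + 1) ≤ max (greedyProfit items W) best :=
  stmt14_general n W items hpos hsorted opt hopt best hbest
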